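/- arXiv:2309.09504 — 4 statements merged into one kernel-verified Lean document; each statement's English description precedes it below -/
import Mathlib

section
/- Let R = (W, R₁, R₂) be a domino set with W finite and nonempty. If for every r ∈ ℕ² there exists an R-domino function on the rectangle [−r, r] = {s ∈ ℤ² : −r ≤ s ≤ r}, then there exists an R-domino function on all of ℤ². -/
/-- `T` is an `(R₁, R₂)`-domino function on `Ω ⊆ ℤ²`: whenever a horizontal (resp. vertical)
domino tile lies in `Ω`, the pair of pips it carries belongs to `R₁` (resp. `R₂`). -/
def IsDominoFunction {W : Type*} (R₁ R₂ : Set (W × W)) (Ω : Set (ℤ × ℤ))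
    (T : ℤ × ℤ → W) : Prop :=
  (∀ s : ℤ × ℤ, s ∈ Ω → (s.1 + 1, s.2) ∈ Ω → (T s, T (s.1 + 1, s.2)) ∈ R₁) ∧
  (∀ s : ℤ × ℤ, s ∈ Ω → (s.1, s.2 + 1) ∈ Ω → (T s, T (s.1, s.2 + 1)) ∈ R₂)

lemma domino_mono {W : Type*} (R₁ R₂ : Set (W × W)) {Ω Ω' : Set (ℤ × ℤ)}
    (hsub : Ω ⊆ Ω') {T : ℤ × ℤ → W} (hT : IsDominoFunction R₁ R₂ Ω' T) :
    IsDominoFunction R₁ R₂ Ω T :=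
  ⟨fun s hs hs' => hT.1 s (hsub hs) (hsub hs'),
   fun s hs hs' => hT.2 s (hsub hs) (hsub hs')⟩

/-- If a domino set admits a domino function on every rectangle `[−r, r]`,
then it admits a domino function on all of `ℤ²`. -/
theorem domino_compactness
    (W : Type*) [Finite W] [Nonempty W] (R₁ R₂ : Set (W × W))
    (h : ∀ r : ℕ × ℕ, ∃ T : ℤ × ℤ → W, IsDominoFunction R₁ R₂
      {s : ℤ × ℤ | -(r.1 : ℤ) ≤ s.1 ∧ s.1 ≤ (r.1 : ℤ) ∧ -(r.2 : ℤ) ≤ s.2 ∧ s.2 ≤ (r.2 : ℤ)} T) :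
    ∃ T : ℤ × ℤ → W, IsDominoFunction R₁ R₂ Set.univ T := by
  letI : TopologicalSpace W := ⊥
  haveI : DiscreteTopology W := ⟨rfl⟩
  haveI : CompactSpace W := Finite.compactSpace
  set rect : ℕ × ℕ → Set (ℤ × ℤ) := fun r =>
    {s : ℤ × ℤ | -(r.1 : ℤ) ≤ s.1 ∧ s.1 ≤ (r.1 : ℤ) ∧ -(r.2 : ℤ) ≤ s.2 ∧ s.2 ≤ (r.2 : ℤ)}
  set C : ℕ × ℕ → Set ((ℤ × ℤ) → W) := fun r =>
    {T | IsDominoFunction R₁ R₂ (rect r) T}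
  have hrect_mono : ∀ {r r' : ℕ × ℕ}, r.1 ≤ r'.1 → r.2 ≤ r'.2 → rect r ⊆ rect r' := by
    intro r r' h1 h2 s hs
    obtain ⟨a, b, c, d⟩ := hs
    exact ⟨le_trans (by exact_mod_cast neg_le_neg (Int.ofNat_le.mpr h1)) a,
      le_trans b (by exact_mod_cast h1),
      le_trans (by exact_mod_cast neg_le_neg (Int.ofNat_le.mpr h2)) c,
      le_trans d (by exact_mod_cast h2)⟩
  have hC_eq : ∀ r, C r =
      (⋂ s ∈ {s : ℤ × ℤ | s ∈ rect r ∧ (s.1 + 1, s.2) ∈ rect r},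
        {T : (ℤ × ℤ) → W | (T s, T (s.1 + 1, s.2)) ∈ R₁}) ∩
      (⋂ s ∈ {s : ℤ × ℤ | s ∈ rect r ∧ (s.1, s.2 + 1) ∈ rect r},
        {T : (ℤ × ℤ) → W | (T s, T (s.1, s.2 + 1)) ∈ R₂}) := by
    intro r
    ext T
    simp only [C, Set.mem_setOf_eq, IsDominoFunction, Set.mem_inter_iff, Set.mem_iInter,
      Set.mem_setOf_eq]
    constructor
    · rintro ⟨h1, h2⟩
      exact ⟨fun s hs => h1 s hs.1 hs.2, fun s hs => h2 s hs.1 hs.2⟩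
    · rintro ⟨h1, h2⟩
      exact ⟨fun s hs hs' => h1 s ⟨hs, hs'⟩, fun s hs hs' => h2 s ⟨hs, hs'⟩⟩
  have hclosed : ∀ r, IsClosed (C r) := by
    intro r
    rw [hC_eq r]
    apply IsClosed.inter
    · refine isClosed_biInter fun s _ => ?_
      have : Continuous fun T : (ℤ × ℤ) → W => (T s, T (s.1 + 1, s.2)) :=
        (continuous_apply s).prodMk (continuous_apply _)
      exact (isClosed_discrete R₁).preimage this
    · refine isClosed_biInter fun s _ => ?_
      have : Continuous fun T : (ℤ × ℤ) → W => (T s, T (s.1, s.2 + 1)) :=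
        (continuous_apply s).prodMk (continuous_apply _)
      exact (isClosed_discrete R₂).preimage this
  have hne : ∀ r, (C r).Nonempty := fun r => h r
  have hdir : Directed (· ⊇ ·) C := by
    intro r r'
    refine ⟨(max r.1 r'.1, max r.2 r'.2), ?_, ?_⟩
    · intro T hT
      exact domino_mono R₁ R₂ (hrect_mono (le_max_left _ _) (le_max_left _ _)) hT
    · intro T hT
      exact domino_mono R₁ R₂ (hrect_mono (le_max_right _ _) (le_max_right _ _)) hT
  have hcomp : ∀ r, IsCompact (C r) := fun r => (hclosed r).isCompact
  obtain ⟨T, hT⟩ := IsCompact.nonempty_iInter_of_directed_nonempty_isCompact_isClosed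
    C hdir hne hcomp hclosed
  simp only [Set.mem_iInter] at hT
  refine ⟨T, ?_, ?_⟩
  · intro s _ _
    have hs : s ∈ rect (s.1.natAbs + 1, s.2.natAbs) := by
      simp only [rect, Set.mem_setOf_eq]
      omega
    have hs' : (s.1 + 1, s.2) ∈ rect (s.1.natAbs + 1, s.2.natAbs) := by
      simp only [rect, Set.mem_setOf_eq]
      omega
    exact (hT (s.1.natAbs + 1, s.2.natAbs)).1 s hs hs'
  · intro s _ _
    have hs : s ∈ rect (s.1.natAbs, s.2.natAbs + 1) := by
      simp only [rect, Set.mem_setOf_eq]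
      omega
    have hs' : (s.1, s.2 + 1) ∈ rect (s.1.natAbs, s.2.natAbs + 1) := by
      simp only [rect, Set.mem_setOf_eq]
      omega
    exact (hT (s.1.natAbs, s.2.natAbs + 1)).2 s hs hs'
end

section
/- Let R = (W, R₁, R₂) be a domino set. There exists an R-domino function on ℤ² if and only if for every r ≥ (0,0) there exists an R-domino function on the rectangle [(0,0), r]. -/
/-- A domino set admits a domino function on `ℤ²` iff it admits one on every
rectangle `[(0,0), r]` with `r ≥ (0,0)`. -/
theorem domino_solvable_iff_solvable_on_rectangles
    (W : Type*) [Finite W] [Nonempty W] (R₁ R₂ : Set (W × W)) :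
    (∃ T : ℤ × ℤ → W, IsDominoFunction R₁ R₂ Set.univ T) ↔
      (∀ r : ℤ × ℤ, (0, 0) ≤ r → ∃ T : ℤ × ℤ → W, IsDominoFunction R₁ R₂
        {s : ℤ × ℤ | 0 ≤ s.1 ∧ s.1 ≤ r.1 ∧ 0 ≤ s.2 ∧ s.2 ≤ r.2} T) := by
  constructor
  · rintro ⟨T, h1, h2⟩ r _
    exact ⟨T, fun s _ _ => h1 s trivial trivial, fun s _ _ => h2 s trivial trivial⟩
  · intro h
    -- For each N, a solution on [0,2N]², shifted by (-N,-N)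
    have hsol : ∀ N : ℕ, ∃ T : ℤ × ℤ → W,
        (∀ s : ℤ × ℤ, -(N:ℤ) ≤ s.1 → s.1 + 1 ≤ N → -(N:ℤ) ≤ s.2 → s.2 ≤ N →
          (T s, T (s.1 + 1, s.2)) ∈ R₁) ∧
        (∀ s : ℤ × ℤ, -(N:ℤ) ≤ s.1 → s.1 ≤ N → -(N:ℤ) ≤ s.2 → s.2 + 1 ≤ N →
          (T s, T (s.1, s.2 + 1)) ∈ R₂) := by
      intro N
      obtain ⟨T, h1, h2⟩ := h ((2 * N : ℤ), (2 * N : ℤ))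
        ⟨by positivity, by positivity⟩
      refine ⟨fun s => T (s.1 + N, s.2 + N), ?_, ?_⟩
      · intro s ha hb hc hd
        have := h1 (s.1 + N, s.2 + N) ⟨by omega, by omega, by omega, by omega⟩
          ⟨by omega, by omega, by omega, by omega⟩
        simpa [add_right_comm] using this
      · intro s ha hb hc hd
        have := h2 (s.1 + N, s.2 + N) ⟨by omega, by omega, by omega, by omega⟩
          ⟨by omega, by omega, by omega, by omega⟩
        simpa [add_right_comm] using this
    choose Ts hTs1 hTs2 using hsol
    set U : Ultrafilter ℕ := Filter.hyperfilter ℕ with hU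
    have key : ∀ s : ℤ × ℤ, ∃ w : W, {N : ℕ | Ts N s = w} ∈ U := by
      intro s
      obtain ⟨w, hw⟩ := Ultrafilter.eq_pure_of_finite (U.map (fun N => Ts N s))
      exact ⟨w, by
        have : {w} ∈ U.map (fun N => Ts N s) := by rw [hw]; exact rfl
        simpa [Ultrafilter.mem_map, Set.preimage] using this⟩
    choose T hT using key
    -- large N belong to U
    have hlarge : ∀ k : ℕ, {N : ℕ | k ≤ N} ∈ U := by
      intro k
      refine (Filter.hyperfilter_le_cofinite) ?_
      rw [Filter.mem_cofinite]
      exact (Set.finite_Iio k).subset (fun n hn => by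
        simp only [Set.mem_compl_iff, Set.mem_setOf_eq, Set.mem_Iio] at hn ⊢; omega)
    refine ⟨T, ?_, ?_⟩
    · intro s _ _
      have hmem : {N : ℕ | Ts N s = T s} ∩ {N | Ts N (s.1 + 1, s.2) = T (s.1 + 1, s.2)}
          ∩ {N | s.1.natAbs + s.2.natAbs + 1 ≤ N} ∈ U :=
        Filter.inter_mem (Filter.inter_mem (hT s) (hT _)) (hlarge _)
      obtain ⟨N, ⟨⟨e1, e2⟩, hN⟩⟩ := U.nonempty_of_mem hmem
      simp only [Set.mem_setOf_eq] at hN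
      have := hTs1 N s (by omega) (by omega) (by omega) (by omega)
      rwa [e1, e2] at this
    · intro s _ _
      have hmem : {N : ℕ | Ts N s = T s} ∩ {N | Ts N (s.1, s.2 + 1) = T (s.1, s.2 + 1)}
          ∩ {N | s.1.natAbs + s.2.natAbs + 1 ≤ N} ∈ U :=
        Filter.inter_mem (Filter.inter_mem (hT s) (hT _)) (hlarge _)
      obtain ⟨N, ⟨⟨e1, e2⟩, hN⟩⟩ := U.nonempty_of_mem hmem
      simp only [Set.mem_setOf_eq] at hN
      have := hTs2 N s (by omega) (by omega) (by omega) (by omega)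
      rwa [e1, e2] at this
end

section
/- Let p be a prime. Let G : Q → ℤ/pℤ be a function on the 4×4 grid Q = {0,1,2,3}² such that G restricted to each row, each diagonal segment {(k, k+c) ∈ Q}, and each anti-diagonal segment {(k, c−k) ∈ Q} agrees with an affine function of the parameter. If G vanishes on the bottom row {(k, 0) : 0 ≤ k ≤ 3} and on the main diagonal {(k, k) : 0 ≤ k ≤ 3}, then G vanishes identically on Q. -/
lemma grid_key (p : ℕ) (hp : p.Prime) (hp5 : 5 ≤ p) (α β : ZMod p) (a b : ℤ)
    (ha0 : 0 ≤ a) (ha3 : a ≤ 3) (hb0 : 0 ≤ b) (hb3 : b ≤ 3) (hab : a ≠ b)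
    (h1 : α * (a : ZMod p) + β = 0) (h2 : α * (b : ZMod p) + β = 0) :
    ∀ k : ℤ, α * (k : ZMod p) + β = 0 := by
  haveI := Fact.mk hp
  have hd : ((a : ZMod p) - b) ≠ 0 := by
    intro h
    have h' : ((a - b : ℤ) : ZMod p) = 0 := by push_cast; exact h
    have hdvd : (p : ℤ) ∣ (a - b) := (ZMod.intCast_zmod_eq_zero_iff_dvd _ p).1 h'
    have hle : (p : ℤ) ≤ |a - b| :=
      Int.le_of_dvd (abs_pos.mpr (sub_ne_zero.mpr hab)) ((dvd_abs _ _).mpr hdvd)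
    have h4 : |a - b| ≤ 3 := by rw [abs_le]; omega
    have h5 : (5 : ℤ) ≤ (p : ℤ) := by exact_mod_cast hp5
    omega
  have hα : α = 0 := by
    have hm : α * ((a : ZMod p) - b) = 0 := by linear_combination h1 - h2
    rcases mul_eq_zero.mp hm with h | h
    · exact h
    · exact absurd h hd
  have hβ : β = 0 := by
    have := h1; rw [hα] at this; simpa using this
  intro k; simp [hα, hβ]

/-- Sudoku-type propagation on a 4×4 grid. If `G : Q → ℤ/pℤ` (with `p ≥ 5`
prime) is affine along every row, diagonal segment and anti-diagonal segment of
`Q = {0,1,2,3}²`, and vanishes on the bottom row and the main diagonal, then `G ≡ 0`. -/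
theorem grid_affine_vanishing
    (p : ℕ) (hp : p.Prime) (hp5 : 5 ≤ p) (G : ℤ × ℤ → ZMod p)
    (hrow : ∀ j : ℤ, 0 ≤ j → j ≤ 3 → ∃ α β : ZMod p,
      ∀ k : ℤ, 0 ≤ k → k ≤ 3 → G (k, j) = α * (k : ZMod p) + β)
    (hdiag : ∀ c : ℤ, ∃ α β : ZMod p,
      ∀ k : ℤ, 0 ≤ k → k ≤ 3 → 0 ≤ k + c → k + c ≤ 3 →
        G (k, k + c) = α * (k : ZMod p) + β)
    (hanti : ∀ c : ℤ, ∃ α β : ZMod p,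
      ∀ k : ℤ, 0 ≤ k → k ≤ 3 → 0 ≤ c - k → c - k ≤ 3 →
        G (k, c - k) = α * (k : ZMod p) + β)
    (hbottom : ∀ k : ℤ, 0 ≤ k → k ≤ 3 → G (k, 0) = 0)
    (hmain : ∀ k : ℤ, 0 ≤ k → k ≤ 3 → G (k, k) = 0) :
    ∀ k j : ℤ, 0 ≤ k → k ≤ 3 → 0 ≤ j → j ≤ 3 → G (k, j) = 0 := by
  -- anti-diagonal c = 2 : points (0,2),(1,1),(2,0). Two zeros ⇒ all zero.
  have z02 : G (0, 2) = 0 := by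
    obtain ⟨α, β, h⟩ := hanti 2
    have e1 : α * ((1 : ℤ) : ZMod p) + β = 0 := by
      rw [← h 1 (by norm_num) (by norm_num) (by norm_num) (by norm_num)]
      norm_num
      exact hmain 1 (by norm_num) (by norm_num)
    have e2 : α * ((2 : ℤ) : ZMod p) + β = 0 := by
      rw [← h 2 (by norm_num) (by norm_num) (by norm_num) (by norm_num)]
      norm_num
      exact hbottom 2 (by norm_num) (by norm_num)
    have := grid_key p hp hp5 α β 1 2 (by norm_num) (by norm_num) (by norm_num)
      (by norm_num) (by norm_num) e1 e2 0
    have h0 := h 0 (by norm_num) (by norm_num) (by norm_num) (by norm_num)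
    norm_num at h0 ⊢
    rw [h0]
    simpa using this
  -- row 2: (0,2) and (2,2) are zero ⇒ whole row zero
  have row2 : ∀ k : ℤ, 0 ≤ k → k ≤ 3 → G (k, 2) = 0 := by
    obtain ⟨α, β, h⟩ := hrow 2 (by norm_num) (by norm_num)
    have e1 : α * ((0 : ℤ) : ZMod p) + β = 0 := by
      rw [← h 0 (by norm_num) (by norm_num)]; exact z02
    have e2 : α * ((2 : ℤ) : ZMod p) + β = 0 := by
      rw [← h 2 (by norm_num) (by norm_num)]
      exact hmain 2 (by norm_num) (by norm_num)
    intro k hk0 hk3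
    rw [h k hk0 hk3]
    exact grid_key p hp hp5 α β 0 2 (by norm_num) (by norm_num) (by norm_num)
      (by norm_num) (by norm_num) e1 e2 k
  -- anti-diagonal c = 3 : points (0,3),(1,2),(2,1),(3,0). (1,2) and (3,0) zero.
  have anti3 : ∀ k : ℤ, 0 ≤ k → k ≤ 3 → G (k, 3 - k) = 0 := by
    obtain ⟨α, β, h⟩ := hanti 3
    have e1 : α * ((1 : ℤ) : ZMod p) + β = 0 := by
      rw [← h 1 (by norm_num) (by norm_num) (by norm_num) (by norm_num)]
      norm_num
      exact row2 1 (by norm_num) (by norm_num)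
    have e2 : α * ((3 : ℤ) : ZMod p) + β = 0 := by
      rw [← h 3 (by norm_num) (by norm_num) (by norm_num) (by norm_num)]
      norm_num
      exact hbottom 3 (by norm_num) (by norm_num)
    intro k hk0 hk3
    rw [h k hk0 hk3 (by omega) (by omega)]
    exact grid_key p hp hp5 α β 1 3 (by norm_num) (by norm_num) (by norm_num)
      (by norm_num) (by norm_num) e1 e2 k
  -- row 3: (0,3) and (3,3) zero ⇒ whole row zero
  have row3 : ∀ k : ℤ, 0 ≤ k → k ≤ 3 → G (k, 3) = 0 := by
    obtain ⟨α, β, h⟩ := hrow 3 (by norm_num) (by norm_num)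
    have e1 : α * ((0 : ℤ) : ZMod p) + β = 0 := by
      rw [← h 0 (by norm_num) (by norm_num)]
      have := anti3 0 (by norm_num) (by norm_num); norm_num at this; exact this
    have e2 : α * ((3 : ℤ) : ZMod p) + β = 0 := by
      rw [← h 3 (by norm_num) (by norm_num)]
      exact hmain 3 (by norm_num) (by norm_num)
    intro k hk0 hk3
    rw [h k hk0 hk3]
    exact grid_key p hp hp5 α β 0 3 (by norm_num) (by norm_num) (by norm_num)
      (by norm_num) (by norm_num) e1 e2 k
  -- row 1: (1,1) and (2,1) zero ⇒ whole row zero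
  have row1 : ∀ k : ℤ, 0 ≤ k → k ≤ 3 → G (k, 1) = 0 := by
    obtain ⟨α, β, h⟩ := hrow 1 (by norm_num) (by norm_num)
    have e1 : α * ((1 : ℤ) : ZMod p) + β = 0 := by
      rw [← h 1 (by norm_num) (by norm_num)]
      exact hmain 1 (by norm_num) (by norm_num)
    have e2 : α * ((2 : ℤ) : ZMod p) + β = 0 := by
      rw [← h 2 (by norm_num) (by norm_num)]
      have := anti3 2 (by norm_num) (by norm_num); norm_num at this; exact this
    intro k hk0 hk3
    rw [h k hk0 hk3]
    exact grid_key p hp hp5 α β 1 2 (by norm_num) (by norm_num) (by norm_num)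
      (by norm_num) (by norm_num) e1 e2 k
  intro k j hk0 hk3 hj0 hj3
  interval_cases j
  · exact hbottom k hk0 hk3
  · exact row1 k hk0 hk3
  · exact row2 k hk0 hk3
  · exact row3 k hk0 hk3
end

section
/- Let p > 48 be a prime, let N be a multiple of p², and let F : B → (ℤ/pℤ)ˣ be a function for which there exist integers A, B, C, not all divisible by p, such that F(n, m) ≡ A·n + B·m + C (mod p) whenever (n, m) ∈ B and A·n + B·m + C is not divisible by p. Then the residues of A, B, C modulo p are uniquely determined by F: if A', B', C' is another such triple, then A ≡ A', B ≡ B', C ≡ C' (mod p). -/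
lemma affine_zero_card (p : ℕ) [hpf : Fact p.Prime] (a b c : ZMod p)
    (h : ¬ (a = 0 ∧ b = 0 ∧ c = 0)) :
    (Finset.univ.filter (fun z : ZMod p × ZMod p => a * z.1 + b * z.2 + c = 0)).card ≤ p := by
  by_cases hb : b = 0
  · by_cases ha : a = 0
    · have hc : c ≠ 0 := by tauto
      have : (Finset.univ.filter (fun z : ZMod p × ZMod p => a * z.1 + b * z.2 + c = 0)) = ∅ := by
        rw [Finset.filter_eq_empty_iff]
        intro z _
        simp [ha, hb, hc]
      rw [this]
      simp
    · have : ∀ z ∈ (Finset.univ.filter (fun z : ZMod p × ZMod p => a * z.1 + b * z.2 + c = 0)),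
          (fun z : ZMod p × ZMod p => z.2) z ∈ (Finset.univ : Finset (ZMod p)) := by
        intros; simp
      have hcard := Finset.card_le_card_of_injOn (fun z : ZMod p × ZMod p => z.2) this ?_
      · simpa [ZMod.card] using hcard
      · intro z hz w hw hzw
        simp only [Finset.mem_coe, Finset.mem_filter] at hz hw
        have h1 : a * z.1 = a * w.1 := by
          have := hz.2.trans hw.2.symm
          simp only at hzw
          rw [hzw] at this
          linear_combination this
        have := mul_left_cancel₀ ha h1
        exact Prod.ext this hzw
  · have : ∀ z ∈ (Finset.univ.filter (fun z : ZMod p × ZMod p => a * z.1 + b * z.2 + c = 0)),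
        (fun z : ZMod p × ZMod p => z.1) z ∈ (Finset.univ : Finset (ZMod p)) := by
      intros; simp
    have hcard := Finset.card_le_card_of_injOn (fun z : ZMod p × ZMod p => z.1) this ?_
    · simpa [ZMod.card] using hcard
    · intro z hz w hw hzw
      simp only [Finset.mem_coe, Finset.mem_filter] at hz hw
      have h1 : b * z.2 = b * w.2 := by
        have := hz.2.trans hw.2.symm
        simp only at hzw
        rw [hzw] at this
        linear_combination this
      have := mul_left_cancel₀ hb h1
      exact Prod.ext hzw this

lemma affine_exists_nonzero (p : ℕ) [hpf : Fact p.Prime] (hp3 : 3 < p)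
    (a₁ b₁ c₁ a₂ b₂ c₂ a₃ b₃ c₃ : ZMod p)
    (h1 : ¬ (a₁ = 0 ∧ b₁ = 0 ∧ c₁ = 0))
    (h2 : ¬ (a₂ = 0 ∧ b₂ = 0 ∧ c₂ = 0))
    (h3 : ¬ (a₃ = 0 ∧ b₃ = 0 ∧ c₃ = 0)) :
    ∃ z : ZMod p × ZMod p, a₁ * z.1 + b₁ * z.2 + c₁ ≠ 0 ∧
      a₂ * z.1 + b₂ * z.2 + c₂ ≠ 0 ∧ a₃ * z.1 + b₃ * z.2 + c₃ ≠ 0 := by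
  by_contra hall
  push_neg at hall
  have hsub : (Finset.univ : Finset (ZMod p × ZMod p)) ⊆
      (Finset.univ.filter (fun z : ZMod p × ZMod p => a₁ * z.1 + b₁ * z.2 + c₁ = 0)) ∪
      (Finset.univ.filter (fun z : ZMod p × ZMod p => a₂ * z.1 + b₂ * z.2 + c₂ = 0)) ∪
      (Finset.univ.filter (fun z : ZMod p × ZMod p => a₃ * z.1 + b₃ * z.2 + c₃ = 0)) := by
    intro z _
    by_cases e1 : a₁ * z.1 + b₁ * z.2 + c₁ = 0
    · simp [e1]
    by_cases e2 : a₂ * z.1 + b₂ * z.2 + c₂ = 0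
    · simp [e2]
    · simp [hall z e1 e2]
  have hc := Finset.card_le_card hsub
  have hcu : (Finset.univ : Finset (ZMod p × ZMod p)).card = p * p := by
    simp [Fintype.card_prod, ZMod.card]
  set S1 := Finset.univ.filter (fun z : ZMod p × ZMod p => a₁ * z.1 + b₁ * z.2 + c₁ = 0)
  set S2 := Finset.univ.filter (fun z : ZMod p × ZMod p => a₂ * z.1 + b₂ * z.2 + c₂ = 0)
  set S3 := Finset.univ.filter (fun z : ZMod p × ZMod p => a₃ * z.1 + b₃ * z.2 + c₃ = 0)
  have hb : (S1 ∪ S2 ∪ S3).card ≤ S1.card + S2.card + S3.card :=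
    (Finset.card_union_le (S1 ∪ S2) S3).trans
      (Nat.add_le_add_right (Finset.card_union_le S1 S2) _)
  have htot : p * p ≤ p + p + p := by
    calc p * p = (Finset.univ : Finset (ZMod p × ZMod p)).card := hcu.symm
    _ ≤ _ := hc
    _ ≤ _ := hb
    _ ≤ p + p + p := by
        gcongr
        · exact affine_zero_card p _ _ _ h1
        · exact affine_zero_card p _ _ _ h2
        · exact affine_zero_card p _ _ _ h3
  nlinarith

/-- Uniqueness mod `p` of the affine form representing a Sudoku solution.
If `p > 48` is prime, `N` a positive multiple of `p²`, and `F` takes the value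
`A·n + B·m + C mod p` at every board cell where this is nonzero mod `p`, then the residues
of `A, B, C` mod `p` are uniquely determined by `F`. -/
theorem affine_form_unique_mod_p
    (p N : ℕ) (hp : p.Prime) (hp48 : 48 < p) (hN : p ^ 2 ∣ N) (hNpos : 0 < N)
    (F : ℤ × ℤ → (ZMod p)ˣ)
    (A B C : ℤ) (hnd : ¬ ((A : ZMod p) = 0 ∧ (B : ZMod p) = 0 ∧ (C : ZMod p) = 0))
    (hrep : ∀ n m : ℤ, 0 ≤ n → n < (N : ℤ) →
      ((A * n + B * m + C : ℤ) : ZMod p) ≠ 0 →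
      ((F (n, m) : ZMod p)) = ((A * n + B * m + C : ℤ) : ZMod p))
    (A' B' C' : ℤ) (hnd' : ¬ ((A' : ZMod p) = 0 ∧ (B' : ZMod p) = 0 ∧ (C' : ZMod p) = 0))
    (hrep' : ∀ n m : ℤ, 0 ≤ n → n < (N : ℤ) →
      ((A' * n + B' * m + C' : ℤ) : ZMod p) ≠ 0 →
      ((F (n, m) : ZMod p)) = ((A' * n + B' * m + C' : ℤ) : ZMod p)) :
    (A : ZMod p) = (A' : ZMod p) ∧ (B : ZMod p) = (B' : ZMod p) ∧
      (C : ZMod p) = (C' : ZMod p) := by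
  haveI : Fact p.Prime := ⟨hp⟩
  have hp3 : 3 < p := by omega
  have hpN : p ≤ N := le_trans (Nat.le_of_lt (by nlinarith [hp.two_le] : p < p ^ 2))
    (Nat.le_of_dvd hNpos hN)
  by_contra hne
  have h3 : ¬ (((A : ZMod p) - A' = 0) ∧ ((B : ZMod p) - B' = 0) ∧ ((C : ZMod p) - C' = 0)) := by
    intro ⟨h1, h2, h3⟩
    exact hne ⟨sub_eq_zero.mp h1, sub_eq_zero.mp h2, sub_eq_zero.mp h3⟩
  obtain ⟨z, hz1, hz2, hz3⟩ := affine_exists_nonzero p hp3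
    (A : ZMod p) (B : ZMod p) (C : ZMod p)
    (A' : ZMod p) (B' : ZMod p) (C' : ZMod p)
    ((A : ZMod p) - A') ((B : ZMod p) - B') ((C : ZMod p) - C') hnd hnd' h3
  set n : ℤ := (z.1.val : ℤ) with hn
  set m : ℤ := (z.2.val : ℤ) with hm
  have hx : ((n : ℤ) : ZMod p) = z.1 := by
    simp [hn, ZMod.natCast_val, ZMod.cast_id]
  have hy : ((m : ℤ) : ZMod p) = z.2 := by
    simp [hm, ZMod.natCast_val, ZMod.cast_id]
  have hn0 : 0 ≤ n := Int.ofNat_nonneg _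
  have hnN : n < (N : ℤ) := by
    have := z.1.val_lt
    omega
  have e1 : ((A * n + B * m + C : ℤ) : ZMod p) = (A : ZMod p) * z.1 + B * z.2 + C := by
    push_cast
    rw [hx, hy]
  have e2 : ((A' * n + B' * m + C' : ℤ) : ZMod p) = (A' : ZMod p) * z.1 + B' * z.2 + C' := by
    push_cast
    rw [hx, hy]
  have hF1 := hrep n m hn0 hnN (by rw [e1]; exact hz1)
  have hF2 := hrep' n m hn0 hnN (by rw [e2]; exact hz2)
  rw [e1] at hF1
  rw [e2] at hF2
  have : ((A : ZMod p) - A') * z.1 + ((B : ZMod p) - B') * z.2 + ((C : ZMod p) - C') = 0 := by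
    have := hF1.symm.trans hF2
    linear_combination this
  exact hz3 this
end
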